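/- Let Ψ : ℝ^n → ℝ be convex with global minimizer x*, and let Q : ℝ^n → ℝ satisfy Q(z) > 0 for all z. Suppose γ ∈ ℝ and h ∈ ℝ^n satisfy Ψ(z) ≥ γ + ⟨h, z⟩ for all z, and let x_b ∈ ℝ^n, γ_b = γ − Ψ(x_b). If E(γ_b, h) := −inf_z (γ_b + ⟨h,z⟩)/Q(z) ≤ η, then 0 ≤ Ψ(x_b) − Ψ(x*) ≤ η Q(x*). -/

import Mathlib

open scoped RealInnerProductSpace

theorem sub_le_mul_of_affine_minorant {E : Type*} [NormedAddCommGroup E]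
    [InnerProductSpace ℝ E] {Ψ Q : E → ℝ} {γ η : ℝ} {h x_b z : E} (hQ : 0 < Q z)
    (hrelax : γ + ⟪h, z⟫ ≤ Ψ z) (hE : -((γ - Ψ x_b + ⟪h, z⟫) / Q z) ≤ η) :
    Ψ x_b - Ψ z ≤ η * Q z := by
  have hgap : -(γ - Ψ x_b + ⟪h, z⟫) ≤ η * Q z := by
    rwa [← neg_div, div_le_iff₀ hQ] at hE
  linarith

theorem osga_error_bound_general (n : ℕ)
    (Ψ Q : EuclideanSpace ℝ (Fin n) → ℝ)
    (xstar : EuclideanSpace ℝ (Fin n)) (hmin : ∀ z, Ψ xstar ≤ Ψ z)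
    (hQ : ∀ z, 0 < Q z)
    (γ : ℝ) (h : EuclideanSpace ℝ (Fin n))
    (hrelax : ∀ z, γ + ⟪h, z⟫ ≤ Ψ z)
    (x_b : EuclideanSpace ℝ (Fin n)) (η : ℝ)
    (hE : ∀ z, -((γ - Ψ x_b + ⟪h, z⟫) / Q z) ≤ η) :
    0 ≤ Ψ x_b - Ψ xstar ∧ Ψ x_b - Ψ xstar ≤ η * Q xstar :=
  ⟨sub_nonneg.2 (hmin x_b), sub_le_mul_of_affine_minorant (hQ xstar) (hrelax xstar) (hE xstar)⟩

/-- The fundamental OSGA error bound: `0 ≤ Ψ(x_b) − Ψ(x*) ≤ η Q(x*)`. -/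
theorem osga_error_bound (n : ℕ)
    (Ψ Q : EuclideanSpace ℝ (Fin n) → ℝ)
    (hΨ : ConvexOn ℝ Set.univ Ψ)
    (xstar : EuclideanSpace ℝ (Fin n)) (hmin : ∀ z, Ψ xstar ≤ Ψ z)
    (hQ : ∀ z, 0 < Q z)
    (γ : ℝ) (h : EuclideanSpace ℝ (Fin n))
    (hrelax : ∀ z, γ + ⟪h, z⟫ ≤ Ψ z)
    (x_b : EuclideanSpace ℝ (Fin n)) (η : ℝ)
    (hE : ∀ z, -((γ - Ψ x_b + ⟪h, z⟫) / Q z) ≤ η) :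
    0 ≤ Ψ x_b - Ψ xstar ∧ Ψ x_b - Ψ xstar ≤ η * Q xstar :=
  osga_error_bound_general n Ψ Q xstar hmin hQ γ h hrelax x_b η hE
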